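/- deriveF preserves the LL(1) property: for every LL(1) focused syntax (s, c) and token t, if deriveF t (s, c) = some (s', c') then the focused syntax (s', c') is LL(1), i.e. ¬HasConflict (unfocus (s', c')). -/

import Mathlib

set_option autoImplicit false

/-- Context-free syntaxes (value-aware context-free expressions). -/
inductive Syn (Token Kind : Type) (Var : Type → Type) : Type → Type 1 where
  | elem (k : Kind) : Syn Token Kind Var Token
  | fail {A : Type} : Syn Token Kind Var A
  | eps {A : Type} (v : A) : Syn Token Kind Var A
  | disj {A : Type} (s₁ s₂ : Syn Token Kind Var A) : Syn Token Kind Var A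
  | seqn {A B : Type} (s₁ : Syn Token Kind Var A) (s₂ : Syn Token Kind Var B) :
      Syn Token Kind Var (A × B)
  | map {A B : Type} (f : A → B) (s : Syn Token Kind Var A) : Syn Token Kind Var B
  | var {A : Type} (x : Var A) : Syn Token Kind Var A

section

variable {Token Kind : Type} {Var : Type → Type}
variable (kd : Token → Kind) (env : ∀ A : Type, Var A → Syn Token Kind Var A)

/-- Semantics of syntaxes. -/
inductive Matches : ∀ {A : Type}, Syn Token Kind Var A → List Token → A → Prop where
  | elem {k : Kind} {t : Token} (h : kd t = k) : Matches (Syn.elem k) [t] t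
  | eps {A : Type} (v : A) : Matches (Syn.eps v) [] v
  | disjL {A : Type} {s₁ s₂ : Syn Token Kind Var A} {ts : List Token} {v : A} :
      Matches s₁ ts v → Matches (Syn.disj s₁ s₂) ts v
  | disjR {A : Type} {s₁ s₂ : Syn Token Kind Var A} {ts : List Token} {v : A} :
      Matches s₂ ts v → Matches (Syn.disj s₁ s₂) ts v
  | seqn {A B : Type} {s₁ : Syn Token Kind Var A} {s₂ : Syn Token Kind Var B}
      {ts₁ ts₂ : List Token} {v₁ : A} {v₂ : B} :
      Matches s₁ ts₁ v₁ → Matches s₂ ts₂ v₂ →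
      Matches (Syn.seqn s₁ s₂) (ts₁ ++ ts₂) (v₁, v₂)
  | map {A B : Type} (f : A → B) {s : Syn Token Kind Var A} {ts : List Token} {v : A} :
      Matches s ts v → Matches (Syn.map f s) ts (f v)
  | var {A : Type} (x : Var A) {ts : List Token} {v : A} :
      Matches (env A x) ts v → Matches (Syn.var x) ts v

/-- Productivity. -/
inductive Productive : ∀ {A : Type}, Syn Token Kind Var A → Prop where
  | eps {A : Type} (v : A) : Productive (Syn.eps v)
  | elem (k : Kind) : Productive (Syn.elem k)
  | disjL {A : Type} {s₁ s₂ : Syn Token Kind Var A} :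
      Productive s₁ → Productive (Syn.disj s₁ s₂)
  | disjR {A : Type} {s₁ s₂ : Syn Token Kind Var A} :
      Productive s₂ → Productive (Syn.disj s₁ s₂)
  | seqn {A B : Type} {s₁ : Syn Token Kind Var A} {s₂ : Syn Token Kind Var B} :
      Productive s₁ → Productive s₂ → Productive (Syn.seqn s₁ s₂)
  | map {A B : Type} (f : A → B) {s : Syn Token Kind Var A} :
      Productive s → Productive (Syn.map f s)
  | var {A : Type} (x : Var A) : Productive (env A x) → Productive (Syn.var x)

/-- Nullability, with associated value. -/
inductive Nullable : ∀ {A : Type}, Syn Token Kind Var A → A → Prop where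
  | eps {A : Type} (v : A) : Nullable (Syn.eps v) v
  | disjL {A : Type} {s₁ s₂ : Syn Token Kind Var A} {v : A} :
      Nullable s₁ v → Nullable (Syn.disj s₁ s₂) v
  | disjR {A : Type} {s₁ s₂ : Syn Token Kind Var A} {v : A} :
      Nullable s₂ v → Nullable (Syn.disj s₁ s₂) v
  | seqn {A B : Type} {s₁ : Syn Token Kind Var A} {s₂ : Syn Token Kind Var B} {v₁ : A} {v₂ : B} :
      Nullable s₁ v₁ → Nullable s₂ v₂ → Nullable (Syn.seqn s₁ s₂) (v₁, v₂)
  | map {A B : Type} (f : A → B) {s : Syn Token Kind Var A} {v : A} :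
      Nullable s v → Nullable (Syn.map f s) (f v)
  | var {A : Type} (x : Var A) {v : A} : Nullable (env A x) v → Nullable (Syn.var x) v

/-- First sets: `InFirst env k s` means `k ∈ First s`. -/
inductive InFirst : ∀ {A : Type}, Kind → Syn Token Kind Var A → Prop where
  | elem (k : Kind) : InFirst k (Syn.elem k)
  | disjL {A : Type} {k : Kind} {s₁ s₂ : Syn Token Kind Var A} :
      InFirst k s₁ → InFirst k (Syn.disj s₁ s₂)
  | disjR {A : Type} {k : Kind} {s₁ s₂ : Syn Token Kind Var A} :
      InFirst k s₂ → InFirst k (Syn.disj s₁ s₂)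
  | seqnL {A B : Type} {k : Kind} {s₁ : Syn Token Kind Var A} {s₂ : Syn Token Kind Var B} :
      InFirst k s₁ → Productive env s₂ → InFirst k (Syn.seqn s₁ s₂)
  | seqnR {A B : Type} {k : Kind} {s₁ : Syn Token Kind Var A} {s₂ : Syn Token Kind Var B}
      {v : A} : Nullable env s₁ v → InFirst k s₂ → InFirst k (Syn.seqn s₁ s₂)
  | map {A B : Type} {k : Kind} (f : A → B) {s : Syn Token Kind Var A} :
      InFirst k s → InFirst k (Syn.map f s)
  | var {A : Type} {k : Kind} (x : Var A) : InFirst k (env A x) → InFirst k (Syn.var x)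

/-- Should-not-follow sets: `InSNF env k s` means `k ∈ ShouldNotFollow s`. -/
inductive InSNF : ∀ {A : Type}, Kind → Syn Token Kind Var A → Prop where
  | disjL {A : Type} {k : Kind} {s₁ s₂ : Syn Token Kind Var A} :
      InSNF k s₁ → InSNF k (Syn.disj s₁ s₂)
  | disjR {A : Type} {k : Kind} {s₁ s₂ : Syn Token Kind Var A} :
      InSNF k s₂ → InSNF k (Syn.disj s₁ s₂)
  | disjFN {A : Type} {k : Kind} {s₁ s₂ : Syn Token Kind Var A} {v : A} :
      InFirst env k s₁ → Nullable env s₂ v → InSNF k (Syn.disj s₁ s₂)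
  | disjNF {A : Type} {k : Kind} {s₁ s₂ : Syn Token Kind Var A} {v : A} :
      Nullable env s₁ v → InFirst env k s₂ → InSNF k (Syn.disj s₁ s₂)
  | seqnL {A B : Type} {k : Kind} {s₁ : Syn Token Kind Var A} {s₂ : Syn Token Kind Var B}
      {v : B} : InSNF k s₁ → Nullable env s₂ v → InSNF k (Syn.seqn s₁ s₂)
  | seqnR {A B : Type} {k : Kind} {s₁ : Syn Token Kind Var A} {s₂ : Syn Token Kind Var B} :
      Productive env s₁ → InSNF k s₂ → InSNF k (Syn.seqn s₁ s₂)
  | map {A B : Type} {k : Kind} (f : A → B) {s : Syn Token Kind Var A} :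
      InSNF k s → InSNF k (Syn.map f s)
  | var {A : Type} {k : Kind} (x : Var A) : InSNF k (env A x) → InSNF k (Syn.var x)

/-- LL(1) conflicts. A syntax `s` is LL(1) iff `¬ HasConflict env s`. -/
inductive HasConflict : ∀ {A : Type}, Syn Token Kind Var A → Prop where
  | disjNN {A : Type} {s₁ s₂ : Syn Token Kind Var A} {v₁ v₂ : A} :
      Nullable env s₁ v₁ → Nullable env s₂ v₂ → HasConflict (Syn.disj s₁ s₂)
  | disjFF {A : Type} {s₁ s₂ : Syn Token Kind Var A} {k : Kind} :
      InFirst env k s₁ → InFirst env k s₂ → HasConflict (Syn.disj s₁ s₂)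
  | disjL {A : Type} {s₁ s₂ : Syn Token Kind Var A} :
      HasConflict s₁ → HasConflict (Syn.disj s₁ s₂)
  | disjR {A : Type} {s₁ s₂ : Syn Token Kind Var A} :
      HasConflict s₂ → HasConflict (Syn.disj s₁ s₂)
  | seqnSF {A B : Type} {s₁ : Syn Token Kind Var A} {s₂ : Syn Token Kind Var B} {k : Kind} :
      InSNF env k s₁ → InFirst env k s₂ → HasConflict (Syn.seqn s₁ s₂)
  | seqnL {A B : Type} {s₁ : Syn Token Kind Var A} {s₂ : Syn Token Kind Var B} :
      HasConflict s₁ → HasConflict (Syn.seqn s₁ s₂)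
  | seqnR {A B : Type} {s₁ : Syn Token Kind Var A} {s₂ : Syn Token Kind Var B} :
      HasConflict s₂ → HasConflict (Syn.seqn s₁ s₂)
  | map {A B : Type} (f : A → B) {s : Syn Token Kind Var A} :
      HasConflict s → HasConflict (Syn.map f s)
  | var {A : Type} (x : Var A) : HasConflict (env A x) → HasConflict (Syn.var x)

end

/-- Layers of a context, with above type `A` and below type `B`. -/
inductive Layer (Token Kind : Type) (Var : Type → Type) : Type → Type → Type 1 where
  | apply {A B : Type} (f : A → B) : Layer Token Kind Var A B
  | prepend {A C : Type} (v : C) : Layer Token Kind Var A (C × A)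
  | followBy {A C : Type} (s : Syn Token Kind Var C) : Layer Token Kind Var A (A × C)

/-- Type-aligned contexts (stacks of layers). -/
inductive Ctx (Token Kind : Type) (Var : Type → Type) : Type → Type → Type 1 where
  | nil {A : Type} : Ctx Token Kind Var A A
  | cons {A B C : Type} (l : Layer Token Kind Var A B) (c : Ctx Token Kind Var B C) :
      Ctx Token Kind Var A C

section

variable {Token Kind : Type} {Var : Type → Type}

def Ctx.isNil : ∀ {A B : Type}, Ctx Token Kind Var A B → Bool
  | _, _, Ctx.nil => true
  | _, _, Ctx.cons _ _ => false

/-- Unfocusing a focused syntax. -/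
def unfocus : ∀ {A B : Type}, Syn Token Kind Var A → Ctx Token Kind Var A B →
    Syn Token Kind Var B
  | _, _, s, Ctx.nil => s
  | _, _, s, Ctx.cons (Layer.apply f) c => unfocus (Syn.map f s) c
  | _, _, s, Ctx.cons (Layer.prepend v) c => unfocus (Syn.seqn (Syn.eps v) s) c
  | _, _, s, Ctx.cons (Layer.followBy s') c => unfocus (Syn.seqn s s') c

/-- Focused syntaxes with below type `B`. -/
def Focused (Token Kind : Type) (Var : Type → Type) (B : Type) : Type 1 :=
  (A : Type) × Syn Token Kind Var A × Ctx Token Kind Var A B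

def unfocusF {B : Type} (fs : Focused Token Kind Var B) : Syn Token Kind Var B :=
  unfocus fs.2.1 fs.2.2

def focusF {A : Type} (s : Syn Token Kind Var A) : Focused Token Kind Var A :=
  ⟨A, s, Ctx.nil⟩

/-- Plugging a value into a context. -/
def plug : ∀ {A B : Type}, A → Ctx Token Kind Var A B → Focused Token Kind Var B
  | A, _, v, Ctx.nil => ⟨A, Syn.eps v, Ctx.nil⟩
  | _, _, v, Ctx.cons (Layer.apply f) c => plug (f v) c
  | _, _, v, Ctx.cons (Layer.prepend v') c => plug (v', v) c
  | _, _, v, Ctx.cons (Layer.followBy s) c => ⟨_, s, Ctx.cons (Layer.prepend v) c⟩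

end

/-!
Everything a context of `unfocus` can observe about its focus is whether it has a conflict,
its should-not-follow set, and whether it is productive. Hence replacing the focus by a syntax
that refines it in these three respects cannot create a conflict in the unfocused syntax.
Each step of `locate` (replacing a nullable focus by `epsilon` of its value and plugging it)
and of `pierce` (descending into the alternative or factor whose first set contains `k`, and
finally replacing `elem k` by `epsilon t`) is such a refinement, up to moving layers between
the focus and the context. The one delicate step descends past a nullable `s₁` in `seqn s₁ s₂`:
there LL(1)-ness of `seqn s₁ s₂` excludes `k ∈ First s₁`, so `pierce` indeed takes that branch.
-/

section Inversion

variable {Token Kind : Type} {Var : Type → Type}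
variable (env : ∀ A : Type, Var A → Syn Token Kind Var A)

/- The rules of each inductive predicate that can conclude it for a given head constructor.
`cases` cannot invert these families directly, since it cannot solve `A × B = A' × B'`. -/

def NullableStep : ∀ {A : Type}, Syn Token Kind Var A → A → Prop
  | _, Syn.eps w, v => v = w
  | _, Syn.elem _, _ => False
  | _, Syn.fail, _ => False
  | _, Syn.disj s₁ s₂, v => Nullable env s₁ v ∨ Nullable env s₂ v
  | _, Syn.seqn s₁ s₂, p => Nullable env s₁ p.1 ∧ Nullable env s₂ p.2
  | _, Syn.map f s, v => ∃ w, v = f w ∧ Nullable env s w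
  | _, Syn.var x, v => Nullable env (env _ x) v

def ProductiveStep : ∀ {A : Type}, Syn Token Kind Var A → Prop
  | _, Syn.eps _ => True
  | _, Syn.elem _ => True
  | _, Syn.fail => False
  | _, Syn.disj s₁ s₂ => Productive env s₁ ∨ Productive env s₂
  | _, Syn.seqn s₁ s₂ => Productive env s₁ ∧ Productive env s₂
  | _, Syn.map _ s => Productive env s
  | _, Syn.var x => Productive env (env _ x)

def InSNFStep (k : Kind) : ∀ {A : Type}, Syn Token Kind Var A → Prop
  | _, Syn.eps _ => False
  | _, Syn.elem _ => False
  | _, Syn.fail => False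
  | _, Syn.disj s₁ s₂ => InSNF env k s₁ ∨ InSNF env k s₂ ∨
      (InFirst env k s₁ ∧ ∃ v, Nullable env s₂ v) ∨
      ((∃ v, Nullable env s₁ v) ∧ InFirst env k s₂)
  | _, Syn.seqn s₁ s₂ => (InSNF env k s₁ ∧ ∃ v, Nullable env s₂ v) ∨
      (Productive env s₁ ∧ InSNF env k s₂)
  | _, Syn.map _ s => InSNF env k s
  | _, Syn.var x => InSNF env k (env _ x)

def HasConflictStep : ∀ {A : Type}, Syn Token Kind Var A → Prop
  | _, Syn.eps _ => False
  | _, Syn.elem _ => False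
  | _, Syn.fail => False
  | _, Syn.disj s₁ s₂ => ((∃ v₁, Nullable env s₁ v₁) ∧ (∃ v₂, Nullable env s₂ v₂)) ∨
      (∃ k, InFirst env k s₁ ∧ InFirst env k s₂) ∨
      HasConflict env s₁ ∨ HasConflict env s₂
  | _, Syn.seqn s₁ s₂ => (∃ k, InSNF env k s₁ ∧ InFirst env k s₂) ∨
      HasConflict env s₁ ∨ HasConflict env s₂
  | _, Syn.map _ s => HasConflict env s
  | _, Syn.var x => HasConflict env (env _ x)

variable {env}

theorem Nullable.step {A : Type} {s : Syn Token Kind Var A} {v : A}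
    (h : Nullable env s v) : NullableStep env s v := by
  induction h with
  | eps => rfl
  | disjL h => exact .inl h
  | disjR h => exact .inr h
  | seqn h₁ h₂ => exact ⟨h₁, h₂⟩
  | map f h => exact ⟨_, rfl, h⟩
  | var x h => exact h

theorem Productive.step {A : Type} {s : Syn Token Kind Var A}
    (h : Productive env s) : ProductiveStep env s := by
  induction h with
  | eps | elem => trivial
  | disjL h => exact .inl h
  | disjR h => exact .inr h
  | seqn h₁ h₂ => exact ⟨h₁, h₂⟩
  | map f h | var x h => exact h

theorem InSNF.step {A : Type} {k : Kind} {s : Syn Token Kind Var A}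
    (h : InSNF env k s) : InSNFStep env k s := by
  induction h with
  | disjL h => exact .inl h
  | disjR h => exact .inr (.inl h)
  | disjFN h₁ h₂ => exact .inr (.inr (.inl ⟨h₁, _, h₂⟩))
  | disjNF h₁ h₂ => exact .inr (.inr (.inr ⟨⟨_, h₁⟩, h₂⟩))
  | seqnL h₁ h₂ => exact .inl ⟨h₁, _, h₂⟩
  | seqnR h₁ h₂ => exact .inr ⟨h₁, h₂⟩
  | map f h | var x h => exact h

theorem HasConflict.step {A : Type} {s : Syn Token Kind Var A}
    (h : HasConflict env s) : HasConflictStep env s := by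
  induction h with
  | disjNN h₁ h₂ => exact .inl ⟨⟨_, h₁⟩, ⟨_, h₂⟩⟩
  | disjFF h₁ h₂ => exact .inr (.inl ⟨_, h₁, h₂⟩)
  | disjL h => exact .inr (.inr (.inl h))
  | disjR h => exact .inr (.inr (.inr h))
  | seqnSF h₁ h₂ => exact .inl ⟨_, h₁, h₂⟩
  | seqnL h => exact .inr (.inl h)
  | seqnR h => exact .inr (.inr h)
  | map f h | var x h => exact h

end Inversion

section Refinement

variable {Token Kind : Type} {Var : Type → Type}
variable {env : ∀ A : Type, Var A → Syn Token Kind Var A}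

theorem Nullable.productive {A : Type} {s : Syn Token Kind Var A} {v : A}
    (h : Nullable env s v) : Productive env s := by
  induction h with
  | eps v => exact .eps v
  | disjL _ ih => exact .disjL ih
  | disjR _ ih => exact .disjR ih
  | seqn _ _ ih₁ ih₂ => exact .seqn ih₁ ih₂
  | map f _ ih => exact .map f ih
  | var x _ ih => exact .var x ih

theorem InFirst.inSNF_of_nullable {A : Type} {k : Kind} {s : Syn Token Kind Var A}
    (hf : InFirst env k s) {v : A} (hn : Nullable env s v) : InSNF env k s := by
  induction hf with
  | elem => exact hn.step.elim
  | disjL hf₁ ih =>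
    rcases hn.step with hn₁ | hn₂
    · exact .disjL (ih hn₁)
    · exact .disjFN hf₁ hn₂
  | disjR hf₂ ih =>
    rcases hn.step with hn₁ | hn₂
    · exact .disjNF hn₁ hf₂
    · exact .disjR (ih hn₂)
  | seqnL _ _ ih =>
    obtain ⟨hn₁, hn₂⟩ := hn.step
    exact .seqnL (ih hn₁) hn₂
  | seqnR _ _ ih =>
    obtain ⟨hn₁, hn₂⟩ := hn.step
    exact .seqnR hn₁.productive (ih hn₂)
  | map f _ ih =>
    obtain ⟨w, rfl, hw⟩ := hn.step
    exact .map f (ih hw)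
  | var x _ ih => exact .var x (ih hn.step)

theorem HasConflict.unfocus {A B : Type} {s : Syn Token Kind Var A}
    (h : HasConflict env s) (c : Ctx Token Kind Var A B) : HasConflict env (unfocus s c) := by
  induction c with
  | nil => exact h
  | cons l c ih =>
    cases l with
    | apply f => exact ih (.map f h)
    | prepend v => exact ih (.seqnR h)
    | followBy s₂ => exact ih (.seqnL h)

theorem not_hasConflict_of_unfocus {A B : Type} {s : Syn Token Kind Var A}
    {c : Ctx Token Kind Var A B} (h : ¬ HasConflict env (unfocus s c)) : ¬ HasConflict env s :=
  fun hs => h (hs.unfocus c)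

variable (env) in
structure Refines {A : Type} (s' s : Syn Token Kind Var A) : Prop where
  hasConflict : HasConflict env s' → HasConflict env s
  inSNF : ∀ k, InSNF env k s' → InSNF env k s
  productive : Productive env s' → Productive env s

namespace Refines

theorem eps_of_productive {A : Type} {s : Syn Token Kind Var A} (v : A)
    (h : Productive env s) : Refines env (Syn.eps v) s :=
  ⟨fun hc => hc.step.elim, fun _ hs => hs.step.elim, fun _ => h⟩

theorem disj_left {A : Type} (s₁ s₂ : Syn Token Kind Var A) :
    Refines env s₁ (Syn.disj s₁ s₂) :=
  ⟨.disjL, fun _ => .disjL, .disjL⟩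

theorem disj_right {A : Type} (s₁ s₂ : Syn Token Kind Var A) :
    Refines env s₂ (Syn.disj s₁ s₂) :=
  ⟨.disjR, fun _ => .disjR, .disjR⟩

theorem var {A : Type} (x : Var A) : Refines env (env A x) (Syn.var x) :=
  ⟨.var x, fun _ => .var x, .var x⟩

variable {A : Type} {s' s : Syn Token Kind Var A}

theorem map {B : Type} (h : Refines env s' s) (f : A → B) :
    Refines env (Syn.map f s') (Syn.map f s) :=
  ⟨fun hc => .map f (h.hasConflict hc.step), fun k hs => .map f (h.inSNF k hs.step),
    fun hp => .map f (h.productive hp.step)⟩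

theorem prepend {C : Type} (h : Refines env s' s) (v : C) :
    Refines env (Syn.seqn (Syn.eps v) s') (Syn.seqn (Syn.eps v) s) where
  hasConflict hc := by
    rcases hc.step with ⟨k, hsnf, _⟩ | hc | hc
    · exact hsnf.step.elim
    · exact hc.step.elim
    · exact .seqnR (h.hasConflict hc)
  inSNF k hs := by
    rcases hs.step with ⟨hsnf, _⟩ | ⟨_, hsnf⟩
    · exact hsnf.step.elim
    · exact .seqnR (.eps v) (h.inSNF k hsnf)
  productive hp := .seqn (.eps v) (h.productive hp.step.2)

theorem followBy {C : Type} (h : Refines env s' s) (s₂ : Syn Token Kind Var C) :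
    Refines env (Syn.seqn s' s₂) (Syn.seqn s s₂) where
  hasConflict hc := by
    rcases hc.step with ⟨k, hsnf, hf⟩ | hc | hc
    · exact .seqnSF (h.inSNF k hsnf) hf
    · exact .seqnL (h.hasConflict hc)
    · exact .seqnR hc
  inSNF k hs := by
    rcases hs.step with ⟨hsnf, _, hn⟩ | ⟨hp, hsnf⟩
    · exact .seqnL (h.inSNF k hsnf) hn
    · exact .seqnR (h.productive hp) hsnf
  productive hp := .seqn (h.productive hp.step.1) hp.step.2

theorem unfocus {B : Type} (h : Refines env s' s) (c : Ctx Token Kind Var A B) :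
    Refines env (unfocus s' c) (unfocus s c) := by
  induction c with
  | nil => exact h
  | cons l c ih =>
    cases l with
    | apply f => exact ih (h.map f)
    | prepend v => exact ih (h.prepend v)
    | followBy s₂ => exact ih (h.followBy s₂)

theorem not_hasConflict_unfocus {B : Type} (h : Refines env s' s)
    (c : Ctx Token Kind Var A B) (hll1 : ¬ HasConflict env (_root_.unfocus s c)) :
    ¬ HasConflict env (_root_.unfocus s' c) :=
  fun hc => hll1 ((h.unfocus c).hasConflict hc)

end Refines

end Refinement

section Derivation

variable {Token Kind : Type} {Var : Type → Type}
variable {env : ∀ A : Type, Var A → Syn Token Kind Var A}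

theorem not_hasConflict_unfocusF_plug {A B : Type} (c : Ctx Token Kind Var A B) (v : A)
    (hll1 : ¬ HasConflict env (unfocus (Syn.eps v) c)) :
    ¬ HasConflict env (unfocusF (plug v c)) := by
  induction c with
  | nil => exact hll1
  | cons l c ih =>
    cases l with
    | apply f =>
      have hrefines : Refines env (Syn.eps (f v)) (Syn.map f (Syn.eps v)) :=
        .eps_of_productive (f v) (.map f (.eps v))
      exact ih (f v) (hrefines.not_hasConflict_unfocus c hll1)
    | prepend v' =>
      have hrefines : Refines env (Syn.eps (v', v)) (Syn.seqn (Syn.eps v') (Syn.eps v)) :=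
        .eps_of_productive (v', v) (.seqn (.eps v') (.eps v))
      exact ih (v', v) (hrefines.not_hasConflict_unfocus c hll1)
    | followBy s₂ => exact hll1

/- `followBy` layers weigh two, since `plug` turns such a layer into a `prepend` layer. -/
def Ctx.weight : ∀ {A B : Type}, Ctx Token Kind Var A B → ℕ
  | _, _, Ctx.nil => 0
  | _, _, Ctx.cons (Layer.apply _) c => c.weight + 1
  | _, _, Ctx.cons (Layer.prepend _) c => c.weight + 1
  | _, _, Ctx.cons (Layer.followBy _) c => c.weight + 2

theorem weight_plug_le {A B : Type} (c : Ctx Token Kind Var A B) (v : A) :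
    (plug v c).2.2.weight ≤ c.weight := by
  induction c with
  | nil => exact le_rfl
  | cons l c ih =>
    cases l with
    | apply f => exact (ih (f v)).trans (Nat.le_succ _)
    | prepend v' => exact (ih (v', v)).trans (Nat.le_succ _)
    | followBy s₂ => exact Nat.le_succ _

theorem weight_plug_cons_lt {A B C : Type} (l : Layer Token Kind Var A B)
    (c : Ctx Token Kind Var B C) (v : A) :
    (plug v (Ctx.cons l c)).2.2.weight < (Ctx.cons l c).weight := by
  cases l with
  | apply f => exact Nat.lt_succ_of_le (weight_plug_le c (f v))
  | prepend v' => exact Nat.lt_succ_of_le (weight_plug_le c (v', v))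
  | followBy s₂ => exact Nat.lt_succ_self _

variable (env) in
def IsNullOpt (nullOpt : ∀ {A : Type}, Syn Token Kind Var A → Option A) : Prop :=
  ∀ {A : Type} (s : Syn Token Kind Var A), ¬ HasConflict env s →
    ∀ v : A, nullOpt s = some v ↔ Nullable env s v

variable (env) in
structure IsLocate (nullOpt : ∀ {A : Type}, Syn Token Kind Var A → Option A)
    (locate : ∀ {B : Type}, Kind → Focused Token Kind Var B → Option (Focused Token Kind Var B)) :
    Prop where
  eq_of_inFirst : ∀ {A B : Type} (k : Kind) (s : Syn Token Kind Var A)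
    (c : Ctx Token Kind Var A B), InFirst env k s →
    locate k (⟨A, s, c⟩ : Focused Token Kind Var B) = some (⟨A, s, c⟩ : Focused Token Kind Var B)
  eq_plug : ∀ {A B : Type} (k : Kind) (s : Syn Token Kind Var A)
    (c : Ctx Token Kind Var A B) (v : A),
    ¬ InFirst env k s → nullOpt s = some v → c.isNil = false →
    locate k (⟨A, s, c⟩ : Focused Token Kind Var B) = locate k (plug v c)
  eq_none_of_nullOpt : ∀ {A B : Type} (k : Kind) (s : Syn Token Kind Var A)
    (c : Ctx Token Kind Var A B),
    ¬ InFirst env k s → nullOpt s = none →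
    locate k (⟨A, s, c⟩ : Focused Token Kind Var B) = none
  eq_none_of_nil : ∀ {A : Type} (k : Kind) (s : Syn Token Kind Var A),
    ¬ InFirst env k s → locate k (⟨A, s, Ctx.nil⟩ : Focused Token Kind Var A) = none

variable (env) in
structure IsPierce (nullOpt : ∀ {A : Type}, Syn Token Kind Var A → Option A)
    (pierce : ∀ {A B : Type}, Kind → Syn Token Kind Var A → Ctx Token Kind Var A B →
      Ctx Token Kind Var Token B) : Prop where
  elem : ∀ {B : Type} (k : Kind) (c : Ctx Token Kind Var Token B), pierce k (Syn.elem k) c = c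
  disj₁ : ∀ {A B : Type} (k : Kind) (s₁ s₂ : Syn Token Kind Var A)
    (c : Ctx Token Kind Var A B),
    ¬ HasConflict env (Syn.disj s₁ s₂) → InFirst env k (Syn.disj s₁ s₂) →
    InFirst env k s₁ → pierce k (Syn.disj s₁ s₂) c = pierce k s₁ c
  disj₂ : ∀ {A B : Type} (k : Kind) (s₁ s₂ : Syn Token Kind Var A)
    (c : Ctx Token Kind Var A B),
    ¬ HasConflict env (Syn.disj s₁ s₂) → InFirst env k (Syn.disj s₁ s₂) →
    ¬ InFirst env k s₁ → pierce k (Syn.disj s₁ s₂) c = pierce k s₂ c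
  seqn₁ : ∀ {A B C : Type} (k : Kind) (s₁ : Syn Token Kind Var A)
    (s₂ : Syn Token Kind Var B) (c : Ctx Token Kind Var (A × B) C),
    ¬ HasConflict env (Syn.seqn s₁ s₂) → InFirst env k (Syn.seqn s₁ s₂) →
    (nullOpt s₁ = none ∨ InFirst env k s₁) →
    pierce k (Syn.seqn s₁ s₂) c = pierce k s₁ (Ctx.cons (Layer.followBy s₂) c)
  seqn₂ : ∀ {A B C : Type} (k : Kind) (s₁ : Syn Token Kind Var A)
    (s₂ : Syn Token Kind Var B) (c : Ctx Token Kind Var (A × B) C) (v : A),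
    ¬ HasConflict env (Syn.seqn s₁ s₂) → InFirst env k (Syn.seqn s₁ s₂) →
    nullOpt s₁ = some v → ¬ InFirst env k s₁ →
    pierce k (Syn.seqn s₁ s₂) c = pierce k s₂ (Ctx.cons (Layer.prepend v) c)
  map : ∀ {A B C : Type} (k : Kind) (f : A → B) (s : Syn Token Kind Var A)
    (c : Ctx Token Kind Var B C),
    ¬ HasConflict env (Syn.map f s) → InFirst env k (Syn.map f s) →
    pierce k (Syn.map f s) c = pierce k s (Ctx.cons (Layer.apply f) c)
  var : ∀ {A B : Type} (k : Kind) (x : Var A) (c : Ctx Token Kind Var A B),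
    ¬ HasConflict env (Syn.var x : Syn Token Kind Var A) →
    InFirst env k (Syn.var x : Syn Token Kind Var A) →
    pierce k (Syn.var x) c = pierce k (env A x) c

variable {nullOpt : ∀ {A : Type}, Syn Token Kind Var A → Option A}

theorem IsLocate.inFirst_and_not_hasConflict
    {locate : ∀ {B : Type}, Kind → Focused Token Kind Var B → Option (Focused Token Kind Var B)}
    (hloc : IsLocate env nullOpt locate) (hnull : IsNullOpt env nullOpt) (k : Kind)
    {A B : Type} (s : Syn Token Kind Var A) (c : Ctx Token Kind Var A B)
    (hll1 : ¬ HasConflict env (unfocus s c)) (fs' : Focused Token Kind Var B)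
    (h : locate k (⟨A, s, c⟩ : Focused Token Kind Var B) = some fs') :
    InFirst env k fs'.2.1 ∧ ¬ HasConflict env (unfocusF fs') := by
  by_cases hf : InFirst env k s
  · rw [hloc.eq_of_inFirst k s c hf] at h
    cases h
    exact ⟨hf, hll1⟩
  cases hv : nullOpt s with
  | none => rw [hloc.eq_none_of_nullOpt k s c hf hv] at h; cases h
  | some v =>
    have hn : Nullable env s v := (hnull s (not_hasConflict_of_unfocus hll1) v).mp hv
    match c, hll1, h with
    | .nil, _, h => rw [hloc.eq_none_of_nil k s hf] at h; cases h
    | .cons l c, hll1, h =>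
      rw [hloc.eq_plug k s _ v hf hv rfl] at h
      have hll1_eps := (Refines.eps_of_productive v hn.productive).not_hasConflict_unfocus _ hll1
      exact hloc.inFirst_and_not_hasConflict hnull k _ _
        (not_hasConflict_unfocusF_plug _ v hll1_eps) fs' h
termination_by c.weight
decreasing_by exact weight_plug_cons_lt l c v

theorem IsPierce.not_hasConflict_unfocus_eps
    {pierce : ∀ {A B : Type}, Kind → Syn Token Kind Var A → Ctx Token Kind Var A B →
      Ctx Token Kind Var Token B}
    (hpierce : IsPierce env nullOpt pierce) (hnull : IsNullOpt env nullOpt) (t : Token)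
    {A : Type} {k : Kind} {s : Syn Token Kind Var A} (hf : InFirst env k s)
    {B : Type} (c : Ctx Token Kind Var A B) (hll1 : ¬ HasConflict env (unfocus s c)) :
    ¬ HasConflict env (unfocus (Syn.eps t) (pierce k s c)) := by
  induction hf generalizing B with
  | elem k =>
    rw [hpierce.elem]
    exact (Refines.eps_of_productive t (.elem k)).not_hasConflict_unfocus c hll1
  | @disjL _ k s₁ s₂ hf₁ ih =>
    rw [hpierce.disj₁ k s₁ s₂ c (not_hasConflict_of_unfocus hll1) (.disjL hf₁) hf₁]
    exact ih c ((Refines.disj_left s₁ s₂).not_hasConflict_unfocus c hll1)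
  | @disjR _ k s₁ s₂ hf₂ ih =>
    have hll1s := not_hasConflict_of_unfocus hll1
    have hf₁ : ¬ InFirst env k s₁ := fun hf₁ => hll1s (.disjFF hf₁ hf₂)
    rw [hpierce.disj₂ k s₁ s₂ c hll1s (.disjR hf₂) hf₁]
    exact ih c ((Refines.disj_right s₁ s₂).not_hasConflict_unfocus c hll1)
  | @seqnL _ _ k s₁ s₂ hf₁ hp₂ ih =>
    rw [hpierce.seqn₁ k s₁ s₂ c (not_hasConflict_of_unfocus hll1) (.seqnL hf₁ hp₂) (.inr hf₁)]
    exact ih (Ctx.cons (Layer.followBy s₂) c) hll1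
  | @seqnR _ _ k s₁ s₂ v hn₁ hf₂ ih =>
    have hll1s := not_hasConflict_of_unfocus hll1
    have hf₁ : ¬ InFirst env k s₁ := fun hf₁ => hll1s (.seqnSF (hf₁.inSNF_of_nullable hn₁) hf₂)
    have hv : nullOpt s₁ = some v := (hnull s₁ (fun hc => hll1s (.seqnL hc)) v).mpr hn₁
    rw [hpierce.seqn₂ k s₁ s₂ c v hll1s (.seqnR hn₁ hf₂) hv hf₁]
    have hrefines := (Refines.eps_of_productive v hn₁.productive).followBy s₂
    exact ih (Ctx.cons (Layer.prepend v) c) (hrefines.not_hasConflict_unfocus c hll1)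
  | @map _ _ k f s hf ih =>
    rw [hpierce.map k f s c (not_hasConflict_of_unfocus hll1) (.map f hf)]
    exact ih (Ctx.cons (Layer.apply f) c) hll1
  | @var _ k x hf ih =>
    rw [hpierce.var k x c (not_hasConflict_of_unfocus hll1) (.var x hf)]
    exact ih c ((Refines.var x).not_hasConflict_unfocus c hll1)

end Derivation
section

variable {Token Kind : Type} {Var : Type → Type}
variable (kd : Token → Kind) (env : ∀ A : Type, Var A → Syn Token Kind Var A)

theorem deriveF_preserves_ll1
    (nullOpt : ∀ {A : Type}, Syn Token Kind Var A → Option A)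
    (hnull : ∀ {A : Type} (s : Syn Token Kind Var A), ¬ HasConflict env s →
      ∀ v : A, nullOpt s = some v ↔ Nullable env s v)
    (locate : ∀ {B : Type}, Kind → Focused Token Kind Var B →
      Option (Focused Token Kind Var B))
    (hlocate_first : ∀ {A B : Type} (k : Kind) (s : Syn Token Kind Var A)
      (c : Ctx Token Kind Var A B), InFirst env k s →
      locate k (⟨A, s, c⟩ : Focused Token Kind Var B) =
        some (⟨A, s, c⟩ : Focused Token Kind Var B))
    (hlocate_plug : ∀ {A B : Type} (k : Kind) (s : Syn Token Kind Var A)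
      (c : Ctx Token Kind Var A B) (v : A),
      ¬ InFirst env k s → nullOpt s = some v → c.isNil = false →
      locate k (⟨A, s, c⟩ : Focused Token Kind Var B) = locate k (plug v c))
    (hlocate_none₁ : ∀ {A B : Type} (k : Kind) (s : Syn Token Kind Var A)
      (c : Ctx Token Kind Var A B),
      ¬ InFirst env k s → nullOpt s = none →
      locate k (⟨A, s, c⟩ : Focused Token Kind Var B) = none)
    (hlocate_none₂ : ∀ {A : Type} (k : Kind) (s : Syn Token Kind Var A),
      ¬ InFirst env k s →
      locate k (⟨A, s, Ctx.nil⟩ : Focused Token Kind Var A) = none)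
    (pierce : ∀ {A B : Type}, Kind → Syn Token Kind Var A → Ctx Token Kind Var A B →
      Ctx Token Kind Var Token B)
    (hpierce_elem : ∀ {B : Type} (k : Kind) (c : Ctx Token Kind Var Token B),
      pierce k (Syn.elem k) c = c)
    (hpierce_disj₁ : ∀ {A B : Type} (k : Kind) (s₁ s₂ : Syn Token Kind Var A)
      (c : Ctx Token Kind Var A B),
      ¬ HasConflict env (Syn.disj s₁ s₂) → InFirst env k (Syn.disj s₁ s₂) →
      InFirst env k s₁ → pierce k (Syn.disj s₁ s₂) c = pierce k s₁ c)
    (hpierce_disj₂ : ∀ {A B : Type} (k : Kind) (s₁ s₂ : Syn Token Kind Var A)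
      (c : Ctx Token Kind Var A B),
      ¬ HasConflict env (Syn.disj s₁ s₂) → InFirst env k (Syn.disj s₁ s₂) →
      ¬ InFirst env k s₁ → pierce k (Syn.disj s₁ s₂) c = pierce k s₂ c)
    (hpierce_seqn₁ : ∀ {A B C : Type} (k : Kind) (s₁ : Syn Token Kind Var A)
      (s₂ : Syn Token Kind Var B) (c : Ctx Token Kind Var (A × B) C),
      ¬ HasConflict env (Syn.seqn s₁ s₂) → InFirst env k (Syn.seqn s₁ s₂) →
      (nullOpt s₁ = none ∨ InFirst env k s₁) →
      pierce k (Syn.seqn s₁ s₂) c = pierce k s₁ (Ctx.cons (Layer.followBy s₂) c))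
    (hpierce_seqn₂ : ∀ {A B C : Type} (k : Kind) (s₁ : Syn Token Kind Var A)
      (s₂ : Syn Token Kind Var B) (c : Ctx Token Kind Var (A × B) C) (v : A),
      ¬ HasConflict env (Syn.seqn s₁ s₂) → InFirst env k (Syn.seqn s₁ s₂) →
      nullOpt s₁ = some v → ¬ InFirst env k s₁ →
      pierce k (Syn.seqn s₁ s₂) c = pierce k s₂ (Ctx.cons (Layer.prepend v) c))
    (hpierce_map : ∀ {A B C : Type} (k : Kind) (f : A → B) (s : Syn Token Kind Var A)
      (c : Ctx Token Kind Var B C),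
      ¬ HasConflict env (Syn.map f s) → InFirst env k (Syn.map f s) →
      pierce k (Syn.map f s) c = pierce k s (Ctx.cons (Layer.apply f) c))
    (hpierce_var : ∀ {A B : Type} (k : Kind) (x : Var A) (c : Ctx Token Kind Var A B),
      ¬ HasConflict env (Syn.var x : Syn Token Kind Var A) →
      InFirst env k (Syn.var x : Syn Token Kind Var A) →
      pierce k (Syn.var x) c = pierce k (env A x) c)
    (deriveF : ∀ {B : Type}, Token → Focused Token Kind Var B →
      Option (Focused Token Kind Var B))
    (hderiveF_none : ∀ {B : Type} (t : Token) (fs : Focused Token Kind Var B),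
      locate (kd t) fs = none → deriveF t fs = none)
    (hderiveF_some : ∀ {B : Type} (t : Token) (fs fs' : Focused Token Kind Var B),
      locate (kd t) fs = some fs' →
      deriveF t fs =
        some (⟨Token, Syn.eps t, pierce (kd t) fs'.2.1 fs'.2.2⟩ : Focused Token Kind Var B))
    {A B : Type} (s : Syn Token Kind Var A) (c : Ctx Token Kind Var A B) (t : Token)
    (hll1 : ¬ HasConflict env (unfocus s c)) (fs' : Focused Token Kind Var B)
    (h : deriveF t (⟨A, s, c⟩ : Focused Token Kind Var B) = some fs') :
    ¬ HasConflict env (unfocusF fs') := by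
  have hloc : IsLocate env nullOpt locate :=
    ⟨hlocate_first, hlocate_plug, hlocate_none₁, hlocate_none₂⟩
  have hpierce : IsPierce env nullOpt pierce := ⟨hpierce_elem, hpierce_disj₁, hpierce_disj₂,
    hpierce_seqn₁, hpierce_seqn₂, hpierce_map, hpierce_var⟩
  cases hlocated : locate (kd t) (⟨A, s, c⟩ : Focused Token Kind Var B) with
  | none => rw [hderiveF_none t _ hlocated] at h; cases h
  | some fs'' =>
    rw [hderiveF_some t _ fs'' hlocated] at h
    cases h
    obtain ⟨hfirst, hll1''⟩ := hloc.inFirst_and_not_hasConflict hnull (kd t) s c hll1 fs'' hlocated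
    exact hpierce.not_hasConflict_unfocus_eps hnull t hfirst fs''.2.2 hll1''

end
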